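/- Let (Ω, F, P) be a probability space with a filtration (F_k)_{k≥0}. Let d ≥ 1, let F : ℝ^d → ℝ be differentiable with L-Lipschitz gradient (L > 0) and bounded below by F_low. Fix α ∈ [0, π/2), nonnegative constants E', A, B, C with B·E' > 0, and p ∈ (1/2, 1), and set α_k := (1 − sin α)/(L·B·E'·(k+1)^p) for all k ≥ 0. Let (w_k)_{k≥0}, (A_k)_{k≥0}, (G_k)_{k≥0} be sequences of ℝ^d-valued random vectors with w_k F_k-measurable, ‖A_k‖² and ‖G_k‖² integrable, and w_{k+1} = w_k − α_k·A_k. Suppose for every k ≥ 0, almost surely: (i) ⟨E[A_k | F_k], ∇F(w_k)⟩ ≥ (1 − sin α)·‖∇F(w_k)‖²; (ii) E[‖A_k‖² | F_k] ≤ E'·E[‖G_k‖² | F_k]; (iii) E[G_k | F_k] = ∇F(w_k); (iv) E[‖G_k‖² | F_k] ≤ 2·A·(F(w_k) − F_low) + B·‖∇F(w_k)‖² + C. Define A' := A·E', C' := C·E', δ_0 := F(w_0) − F_low (assuming w_0 is deterministic), and Q := ∑_{k=0}^{∞} α_k² (which is finite). Then for every K ≥ 1, min_{0 ≤ k ≤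 K-1} E[‖∇F(w_k)‖] ≤ ( exp(L·A'·Q)·(2·δ_0 + L·C'·Q) / ((1 − sin α)·α_0) )^{1/2} · K^{-(1-p)/2}; in particular min_{0 ≤ k ≤ K-1} E[‖∇F(w_k)‖] = O(K^{-(1-p)/2}) as K → ∞. -/

import Mathlib

/-!
By the descent lemma for the `L`-smooth `F`, one step of the iteration gives
`F(w_{k+1}) ≤ F(w_k) - α_k ⟪∇F(w_k), A_k⟫ + (L/2) α_k² ‖A_k‖²`. Conditioning on `ℱ_k`,
condition (i) makes the middle term at most `-(1 - sin α) α_k ‖∇F(w_k)‖²` in expectation, and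
(ii), (iv) bound `E‖A_k‖²` with the constants `A' = A E'`, `B' = B E'`, `C' = C E'`.
Since `α_k L B' ≤ 1 - sin α`, half of the decrease survives, so `δ_k := E F(w_k) - F_low`
satisfies
`δ_{k+1} + (1 - sin α) α_k / 2 · E‖∇F(w_k)‖² ≤ (1 + L A' α_k²) δ_k + (L/2) C' α_k²`.
Unrolling this with `1 + x ≤ exp x` bounds `∑_{k<K} α_k E‖∇F(w_k)‖²` by
`exp(L A' Q) (2 δ_0 + L C' Q) / (1 - sin α)`. Finally `α_k ≥ α_0 / K^p` for `k < K` and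
`(E‖∇F(w_k)‖)² ≤ E‖∇F(w_k)‖²`, which gives the rate for the smallest `E‖∇F(w_k)‖`.
-/

open MeasureTheory Filter
open scoped RealInnerProductSpace

section Smooth

variable {E : Type*} [NormedAddCommGroup E] [InnerProductSpace ℝ E] [CompleteSpace E]
  {F : E → ℝ} {L : ℝ}

theorem continuous_gradient_of_norm_sub_le
    (hlip : ∀ x y, ‖gradient F x - gradient F y‖ ≤ L * ‖x - y‖) : Continuous (gradient F) :=
  (LipschitzWith.of_dist_le' (K := L) fun x y => by
    simpa only [dist_eq_norm] using hlip x y).continuous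

theorem le_add_inner_gradient_add_of_norm_sub_le (hF : Differentiable ℝ F)
    (hlip : ∀ x y, ‖gradient F x - gradient F y‖ ≤ L * ‖x - y‖) (x v : E) :
    F (x + v) ≤ F x + ⟪gradient F x, v⟫ + L / 2 * ‖v‖ ^ 2 := by
  -- `F` minus its quadratic model along the segment; the claim is `φ 1 ≤ φ 0`.
  set φ : ℝ → ℝ := fun t => F (x + t • v) - t * ⟪gradient F x, v⟫ - L / 2 * t ^ 2 * ‖v‖ ^ 2
  have hφ : ∀ t, HasDerivAt φ (⟪gradient F (x + t • v) - gradient F x, v⟫ - L * t * ‖v‖ ^ 2) t := by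
    intro t
    have hline : HasDerivAt (fun t : ℝ => x + t • v) v t := by
      simpa using ((hasDerivAt_id t).smul_const v).const_add x
    have hF' := (hF (x + t • v)).hasGradientAt.hasFDerivAt.comp_hasDerivAt t hline
    refine ((hF'.sub ((hasDerivAt_id t).mul_const ⟪gradient F x, v⟫)).sub
      (((hasDerivAt_pow 2 t).const_mul (L / 2)).mul_const (‖v‖ ^ 2))).congr_deriv ?_
    simp only [InnerProductSpace.toDual_apply_apply, inner_sub_left]
    ring
  have hanti : AntitoneOn φ (Set.Ici 0) := by
    refine antitoneOn_of_hasDerivWithinAt_nonpos (convex_Ici 0)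
      (HasDerivAt.continuousOn fun t _ => hφ t) (fun t _ => (hφ t).hasDerivWithinAt) ?_
    intro t ht
    rw [interior_Ici] at ht
    have hnorm : ‖gradient F (x + t • v) - gradient F x‖ ≤ L * (t * ‖v‖) := by
      simpa [norm_smul, abs_of_pos (Set.mem_Ioi.1 ht)] using hlip (x + t • v) x
    nlinarith [real_inner_le_norm (gradient F (x + t • v) - gradient F x) v, norm_nonneg v]
  have := hanti Set.self_mem_Ici (Set.mem_Ici.2 zero_le_one) zero_le_one
  simp only [φ, one_smul, zero_smul, add_zero, one_pow, one_mul, zero_mul, sub_zero,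
    ne_eq, OfNat.ofNat_ne_zero, not_false_eq_true, zero_pow, mul_zero] at this
  linarith

end Smooth

theorem memLp_two_of_update {Ω E : Type*} {mΩ : MeasurableSpace Ω} {μ : Measure Ω}
    [NormedAddCommGroup E] [NormedSpace ℝ E] {w Y : ℕ → Ω → E} {η : ℕ → ℝ} (hη : ∀ k, η k ≠ 0)
    (hw : ∀ k, AEStronglyMeasurable (w k) μ) (hw0 : MemLp (w 0) 2 μ)
    (hY : ∀ k, Integrable (fun ω => ‖Y k ω‖ ^ 2) μ)
    (hupdate : ∀ k ω, w (k + 1) ω = w k ω - η k • Y k ω) (k : ℕ) :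
    MemLp (Y k) 2 μ ∧ MemLp (w k) 2 μ := by
  have hYL2 : ∀ k, MemLp (Y k) 2 μ := fun k => by
    have hYw : Y k = fun ω => (η k)⁻¹ • (w k ω - w (k + 1) ω) := by
      funext ω
      rw [hupdate, sub_sub_cancel, inv_smul_smul₀ (hη k)]
    refine (memLp_two_iff_integrable_sq_norm ?_).2 (hY k)
    exact hYw ▸ ((hw k).sub (hw (k + 1))).const_smul _
  refine ⟨hYL2 k, ?_⟩
  induction k with
  | zero => exact hw0
  | succ k ih =>
    rw [show w (k + 1) = w k - η k • Y k from funext (hupdate k)]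
    exact ih.sub ((hYL2 k).const_smul (η k))

section Integrability

variable {Ω E : Type*} {mΩ : MeasurableSpace Ω} {μ : Measure Ω}
  [NormedAddCommGroup E] [InnerProductSpace ℝ E] [CompleteSpace E] {F : E → ℝ} {L : ℝ}

theorem MeasureTheory.MemLp.gradient_comp [IsFiniteMeasure μ] {p : ENNReal}
    (hlip : ∀ x y, ‖gradient F x - gradient F y‖ ≤ L * ‖x - y‖) {X : Ω → E}
    (hX : MemLp X p μ) : MemLp (fun ω => gradient F (X ω)) p μ := by
  have hg : LipschitzWith L.toNNReal fun x => gradient F x - gradient F 0 :=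
    LipschitzWith.of_dist_le' fun x y => by simpa [dist_eq_norm] using hlip x y
  convert (hg.comp_memLp (by simp) hX).add (memLp_const (gradient F 0)) using 1
  funext ω
  simp

theorem MeasureTheory.MemLp.integrable_comp_of_norm_gradient_sub_le [IsFiniteMeasure μ]
    (hF : Differentiable ℝ F) (hlip : ∀ x y, ‖gradient F x - gradient F y‖ ≤ L * ‖x - y‖)
    {Flow : ℝ} (hlow : ∀ x, Flow ≤ F x) {X : Ω → E} (hX : MemLp X 2 μ) :
    Integrable (fun ω => F (X ω)) μ :=
  integrable_of_le_of_le (g₁ := fun _ => Flow)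
    (g₂ := fun ω => F 0 + ⟪gradient F 0, X ω⟫ + L / 2 * ‖X ω‖ ^ 2)
    (hF.continuous.comp_aestronglyMeasurable hX.1) (ae_of_all _ fun ω => hlow (X ω))
    (ae_of_all _ fun ω => by
      simpa using le_add_inner_gradient_add_of_norm_sub_le hF hlip 0 (X ω))
    (integrable_const Flow)
    (((integrable_const _).add ((hX.integrable one_le_two).const_inner _)).add
      (((memLp_two_iff_integrable_sq_norm hX.1).1 hX).const_mul _))

theorem integral_comp_sub_smul_le [IsFiniteMeasure μ] (hF : Differentiable ℝ F)
    (hlip : ∀ x y, ‖gradient F x - gradient F y‖ ≤ L * ‖x - y‖) {Flow : ℝ}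
    (hlow : ∀ x, Flow ≤ F x) (η : ℝ) {X Y : Ω → E} (hX : MemLp X 2 μ) (hY : MemLp Y 2 μ) :
    ∫ ω, F (X ω - η • Y ω) ∂μ ≤ ∫ ω, F (X ω) ∂μ
      - η * ∫ ω, ⟪gradient F (X ω), Y ω⟫ ∂μ + L / 2 * η ^ 2 * ∫ ω, ‖Y ω‖ ^ 2 ∂μ := by
  have hG := hX.gradient_comp hlip
  have hFX := hX.integrable_comp_of_norm_gradient_sub_le hF hlip hlow
  have hGY : Integrable (fun ω => ⟪gradient F (X ω), Y ω⟫) μ :=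
    memLp_one_iff_integrable.1 ((innerSL ℝ).memLp_of_bilin 1 hG hY)
  have hY2 := (memLp_two_iff_integrable_sq_norm hY.1).1 hY
  have hpt : ∀ ω, F (X ω - η • Y ω) ≤
      F (X ω) - η * ⟪gradient F (X ω), Y ω⟫ + L / 2 * η ^ 2 * ‖Y ω‖ ^ 2 := fun ω => by
    have := le_add_inner_gradient_add_of_norm_sub_le hF hlip (X ω) (-(η • Y ω))
    rwa [← sub_eq_add_neg, inner_neg_right, real_inner_smul_right, norm_neg, norm_smul,
      Real.norm_eq_abs, mul_pow, sq_abs, ← sub_eq_add_neg, ← mul_assoc] at this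
  have hint := hFX.sub (hGY.const_mul η)
  refine (integral_mono (g := fun ω => F (X ω) - η * ⟪gradient F (X ω), Y ω⟫ +
    L / 2 * η ^ 2 * ‖Y ω‖ ^ 2) ((hX.sub (hY.const_smul η)).integrable_comp_of_norm_gradient_sub_le
      hF hlip hlow) (hint.add (hY2.const_mul _)) hpt).trans_eq ?_
  rw [integral_add (f := fun ω => F (X ω) - η * ⟪gradient F (X ω), Y ω⟫) hint
    (hY2.const_mul _), integral_sub hFX (hGY.const_mul η), integral_const_mul, integral_const_mul]

end Integrability

section CondExp

variable {Ω E : Type*} {m mΩ : MeasurableSpace Ω} {μ : Measure Ω}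
  [NormedAddCommGroup E] [InnerProductSpace ℝ E] [CompleteSpace E]

theorem integral_le_of_condExp_le (hm : m ≤ mΩ) [SigmaFinite (μ.trim hm)] {f g : Ω → ℝ}
    (hg : Integrable g μ) (hfg : μ[f|m] ≤ᵐ[μ] g) : ∫ ω, f ω ∂μ ≤ ∫ ω, g ω ∂μ :=
  (integral_condExp hm).symm.trans_le (integral_mono_ae integrable_condExp hg hfg)

theorem le_integral_inner_of_le_inner_condExp (hm : m ≤ mΩ) [SigmaFinite (μ.trim hm)]
    {X Y : Ω → E} {g : Ω → ℝ} (hX : StronglyMeasurable[m] X)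
    (hXY : Integrable (fun ω => ⟪X ω, Y ω⟫) μ) (hY : Integrable Y μ) (hg : Integrable g μ)
    (hle : ∀ᵐ ω ∂μ, g ω ≤ ⟪(μ[Y|m]) ω, X ω⟫) :
    ∫ ω, g ω ∂μ ≤ ∫ ω, ⟪X ω, Y ω⟫ ∂μ := by
  have hpull : μ[fun ω => ⟪X ω, Y ω⟫|m] =ᵐ[μ] fun ω => ⟪X ω, (μ[Y|m]) ω⟫ :=
    condExp_bilin_of_stronglyMeasurable_left (innerSL ℝ) hX hXY hY
  refine (integral_mono_ae hg integrable_condExp ?_).trans_eq (integral_condExp hm)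
  filter_upwards [hle, hpull] with ω hω hpullω
  rwa [hpullω, real_inner_comm]

end CondExp

theorem sq_integral_le_integral_sq {Ω : Type*} {mΩ : MeasurableSpace Ω} {μ : Measure Ω}
    [IsProbabilityMeasure μ] {f : Ω → ℝ} (hf : MemLp f 2 μ) :
    (∫ ω, f ω ∂μ) ^ 2 ≤ ∫ ω, f ω ^ 2 ∂μ := by
  have := ProbabilityTheory.variance_nonneg f μ
  rw [ProbabilityTheory.variance_eq_sub hf] at this
  simpa using this

theorem add_sum_le_exp_mul_of_le_one_add_mul {δ a s : ℕ → ℝ} {c b : ℝ} (hc : 0 ≤ c) (hb : 0 ≤ b)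
    (hδ0 : 0 ≤ δ 0) (ha : ∀ k, 0 ≤ a k) (hs : ∀ k, 0 ≤ s k)
    (hrec : ∀ k, δ (k + 1) + a k ≤ (1 + c * s k) * δ k + b * s k) (K : ℕ) :
    δ K + ∑ k ∈ Finset.range K, a k ≤
      Real.exp (c * ∑ k ∈ Finset.range K, s k) * (δ 0 + b * ∑ k ∈ Finset.range K, s k) := by
  induction K with
  | zero => simp
  | succ K ih =>
    set S := ∑ k ∈ Finset.range K, s k
    have hS : 0 ≤ S := Finset.sum_nonneg fun k _ => hs k
    have hA : 0 ≤ ∑ k ∈ Finset.range K, a k := Finset.sum_nonneg fun k _ => ha k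
    have hcs : 0 ≤ c * s K := mul_nonneg hc (hs K)
    have hbs : 0 ≤ b * s K := mul_nonneg hb (hs K)
    have hexp : 1 + c * s K ≤ Real.exp (c * s K) := by
      linarith [Real.add_one_le_exp (c * s K)]
    have hone : 1 ≤ Real.exp (c * S) * Real.exp (c * s K) :=
      one_le_mul_of_one_le_of_one_le (Real.one_le_exp (mul_nonneg hc hS)) (Real.one_le_exp hcs)
    have hY : 0 ≤ Real.exp (c * S) * (δ 0 + b * S) := by positivity
    rw [Finset.sum_range_succ, Finset.sum_range_succ, mul_add c, Real.exp_add]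
    calc δ (K + 1) + (∑ k ∈ Finset.range K, a k + a K)
        ≤ (1 + c * s K) * (δ K + ∑ k ∈ Finset.range K, a k) + b * s K := by
          nlinarith [hrec K, mul_nonneg hcs hA]
      _ ≤ Real.exp (c * s K) * (Real.exp (c * S) * (δ 0 + b * S)) + b * s K := by
          nlinarith [mul_le_mul_of_nonneg_left ih (by linarith : 0 ≤ 1 + c * s K),
            mul_le_mul_of_nonneg_right hexp hY]
      _ ≤ Real.exp (c * S) * Real.exp (c * s K) * (δ 0 + b * (S + s K)) := by
          nlinarith [mul_le_mul_of_nonneg_right hone hbs]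

theorem sum_le_exp_tsum_mul_of_le_one_add_mul {δ a s : ℕ → ℝ} {c b : ℝ} (hc : 0 ≤ c)
    (hb : 0 ≤ b) (hδ : ∀ k, 0 ≤ δ k) (ha : ∀ k, 0 ≤ a k) (hs : ∀ k, 0 ≤ s k)
    (hsum : Summable s) (hrec : ∀ k, δ (k + 1) + a k ≤ (1 + c * s k) * δ k + b * s k) (K : ℕ) :
    ∑ k ∈ Finset.range K, a k ≤ Real.exp (c * ∑' k, s k) * (δ 0 + b * ∑' k, s k) := by
  have hS := hsum.sum_le_tsum (Finset.range K) fun k _ => hs k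
  calc ∑ k ∈ Finset.range K, a k ≤ δ K + ∑ k ∈ Finset.range K, a k :=
        le_add_of_nonneg_left (hδ K)
    _ ≤ _ := add_sum_le_exp_mul_of_le_one_add_mul hc hb (hδ 0) ha hs hrec K
    _ ≤ _ := by
        gcongr
        exact add_nonneg (hδ 0) (mul_nonneg hb (Finset.sum_nonneg fun k _ => hs k))

section Descent

variable {Ω E : Type*} {m mΩ : MeasurableSpace Ω} {μ : Measure Ω} [IsProbabilityMeasure μ]
  [NormedAddCommGroup E] [InnerProductSpace ℝ E] [CompleteSpace E] {F : E → ℝ} {L : ℝ}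

theorem integral_comp_sub_smul_sub_le_of_condExp (hm : m ≤ mΩ) (hL : 0 ≤ L)
    (hF : Differentiable ℝ F) (hlip : ∀ x y, ‖gradient F x - gradient F y‖ ≤ L * ‖x - y‖)
    {Flow : ℝ} (hlow : ∀ x, Flow ≤ F x) {A B C c η : ℝ} (hη : 0 ≤ η) (hηB : η * L * B ≤ c)
    {X Y : Ω → E} (hXm : StronglyMeasurable[m] X) (hX : MemLp X 2 μ) (hY : MemLp Y 2 μ)
    (hcorr : ∀ᵐ ω ∂μ, c * ‖gradient F (X ω)‖ ^ 2 ≤ ⟪(μ[Y|m]) ω, gradient F (X ω)⟫)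
    (hvar : ∀ᵐ ω ∂μ, (μ[fun ω => ‖Y ω‖ ^ 2|m]) ω ≤
      2 * A * (F (X ω) - Flow) + B * ‖gradient F (X ω)‖ ^ 2 + C) :
    (∫ ω, F (X ω - η • Y ω) ∂μ - Flow) + η * c / 2 * ∫ ω, ‖gradient F (X ω)‖ ^ 2 ∂μ ≤
      (1 + L * A * η ^ 2) * (∫ ω, F (X ω) ∂μ - Flow) + L / 2 * C * η ^ 2 := by
  have hG := hX.gradient_comp hlip
  have hFX := hX.integrable_comp_of_norm_gradient_sub_le hF hlip hlow
  have hG2 := (memLp_two_iff_integrable_sq_norm hG.1).1 hG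
  have hcorr' : c * ∫ ω, ‖gradient F (X ω)‖ ^ 2 ∂μ ≤ ∫ ω, ⟪gradient F (X ω), Y ω⟫ ∂μ := by
    rw [← integral_const_mul]
    exact le_integral_inner_of_le_inner_condExp hm
      ((continuous_gradient_of_norm_sub_le hlip).comp_stronglyMeasurable hXm)
      (memLp_one_iff_integrable.1 ((innerSL ℝ).memLp_of_bilin 1 hG hY))
      (hY.integrable one_le_two) (hG2.const_mul c) hcorr
  have hvar' : ∫ ω, ‖Y ω‖ ^ 2 ∂μ ≤ 2 * A * (∫ ω, F (X ω) ∂μ - Flow)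
      + B * ∫ ω, ‖gradient F (X ω)‖ ^ 2 ∂μ + C := by
    have h1 : Integrable (fun ω => 2 * A * (F (X ω) - Flow)) μ :=
      (hFX.sub (integrable_const Flow)).const_mul _
    have h12 : Integrable (fun ω => 2 * A * (F (X ω) - Flow) + B * ‖gradient F (X ω)‖ ^ 2) μ :=
      h1.add (hG2.const_mul B)
    refine (integral_le_of_condExp_le hm (g := fun ω => 2 * A * (F (X ω) - Flow) +
      B * ‖gradient F (X ω)‖ ^ 2 + C) (h12.add (integrable_const C)) hvar).trans_eq ?_
    rw [integral_add h12 (integrable_const C), integral_add h1 (hG2.const_mul B),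
      integral_const_mul, integral_const_mul, integral_sub hFX (integrable_const Flow)]
    simp
  have hg : 0 ≤ ∫ ω, ‖gradient F (X ω)‖ ^ 2 ∂μ := integral_nonneg fun ω => sq_nonneg _
  nlinarith [integral_comp_sub_smul_le hF hlip hlow η hX hY, mul_le_mul_of_nonneg_left hcorr' hη,
    mul_le_mul_of_nonneg_left hvar' (by positivity : 0 ≤ L / 2 * η ^ 2),
    mul_le_mul_of_nonneg_left hηB (by positivity : 0 ≤ η * (∫ ω, ‖gradient F (X ω)‖ ^ 2 ∂μ) / 2)]

theorem sum_mul_sq_integral_norm_gradient_le (ℱ : Filtration ℕ mΩ) (hL : 0 ≤ L)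
    (hF : Differentiable ℝ F) (hlip : ∀ x y, ‖gradient F x - gradient F y‖ ≤ L * ‖x - y‖)
    {Flow : ℝ} (hlow : ∀ x, Flow ≤ F x) {c E' A B C : ℝ} (hc : 0 < c) (hE' : 0 ≤ E')
    (hA : 0 ≤ A) (hC : 0 ≤ C) {η : ℕ → ℝ} (hη : ∀ k, 0 < η k)
    (hηB : ∀ k, η k * L * (B * E') ≤ c) (hη2 : Summable fun k => η k ^ 2)
    {w Y G : ℕ → Ω → E} (hw : ∀ k, StronglyMeasurable[ℱ k] (w k)) {w₀ : E}
    (hw0 : ∀ ω, w 0 ω = w₀) (hY : ∀ k, Integrable (fun ω => ‖Y k ω‖ ^ 2) μ)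
    (hupdate : ∀ k ω, w (k + 1) ω = w k ω - η k • Y k ω)
    (hcorr : ∀ k, ∀ᵐ ω ∂μ, c * ‖gradient F (w k ω)‖ ^ 2 ≤ ⟪(μ[Y k|ℱ k]) ω, gradient F (w k ω)⟫)
    (hYG : ∀ k, ∀ᵐ ω ∂μ,
      (μ[fun ω => ‖Y k ω‖ ^ 2|ℱ k]) ω ≤ E' * (μ[fun ω => ‖G k ω‖ ^ 2|ℱ k]) ω)
    (hG : ∀ k, ∀ᵐ ω ∂μ, (μ[fun ω => ‖G k ω‖ ^ 2|ℱ k]) ω ≤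
      2 * A * (F (w k ω) - Flow) + B * ‖gradient F (w k ω)‖ ^ 2 + C) (K : ℕ) :
    ∑ k ∈ Finset.range K, η k * (∫ ω, ‖gradient F (w k ω)‖ ∂μ) ^ 2 ≤
      Real.exp (L * (A * E') * ∑' k, η k ^ 2) *
        (2 * (F w₀ - Flow) + L * (C * E') * ∑' k, η k ^ 2) / c := by
  have hL2 := memLp_two_of_update (fun k => (hη k).ne')
    (fun k => ((hw k).mono (ℱ.le k)).aestronglyMeasurable)
    (funext hw0 ▸ memLp_const w₀) hY hupdate
  have hδ : ∀ k, 0 ≤ ∫ ω, F (w k ω) ∂μ - Flow := fun k => by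
    simpa using integral_mono (integrable_const Flow)
      ((hL2 k).2.integrable_comp_of_norm_gradient_sub_le hF hlip hlow) fun ω => hlow (w k ω)
  have hvar : ∀ k, ∀ᵐ ω ∂μ, (μ[fun ω => ‖Y k ω‖ ^ 2|ℱ k]) ω ≤ 2 * (A * E') * (F (w k ω) - Flow)
      + B * E' * ‖gradient F (w k ω)‖ ^ 2 + C * E' := fun k => by
    filter_upwards [hYG k, hG k] with ω hYω hGω
    linarith [mul_le_mul_of_nonneg_left hGω hE']
  have hrec := fun k => by
    simpa only [← hupdate] using integral_comp_sub_smul_sub_le_of_condExp (ℱ.le k) hL hF hlip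
      hlow (hη k).le (hηB k) (hw k) (hL2 k).2 (hL2 k).1 (hcorr k) (hvar k)
  have hsum := sum_le_exp_tsum_mul_of_le_one_add_mul (δ := fun k => ∫ ω, F (w k ω) ∂μ - Flow)
    (a := fun k => η k * c / 2 * ∫ ω, ‖gradient F (w k ω)‖ ^ 2 ∂μ) (b := L / 2 * (C * E'))
    (by positivity) (by positivity) hδ (fun k => by have := hη k; positivity)
    (fun k => sq_nonneg (η k)) hη2 hrec K
  have hF0 : ∫ ω, F (w 0 ω) ∂μ = F w₀ := by simp [hw0]
  calc ∑ k ∈ Finset.range K, η k * (∫ ω, ‖gradient F (w k ω)‖ ∂μ) ^ 2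
      ≤ ∑ k ∈ Finset.range K, η k * ∫ ω, ‖gradient F (w k ω)‖ ^ 2 ∂μ :=
        Finset.sum_le_sum fun k _ => mul_le_mul_of_nonneg_left
          (sq_integral_le_integral_sq ((hL2 k).2.gradient_comp hlip).norm) (hη k).le
    _ = 2 / c * ∑ k ∈ Finset.range K, η k * c / 2 * ∫ ω, ‖gradient F (w k ω)‖ ^ 2 ∂μ := by
        rw [Finset.mul_sum]
        exact Finset.sum_congr rfl fun k _ => by field_simp
    _ ≤ _ := by
        rw [hF0] at hsum
        rw [div_mul_eq_mul_div, div_le_div_iff_of_pos_right hc]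
        linarith

end Descent

section StepSize

variable {η : ℕ → ℝ} {c D p : ℝ}

theorem eq_div_rpow_of_eq_div_mul_rpow (hη : ∀ k : ℕ, η k = c / (D * ((k : ℝ) + 1) ^ p))
    (k : ℕ) : η k = η 0 / ((k : ℝ) + 1) ^ p := by
  rw [hη, hη 0]
  simp [div_div]

theorem mul_le_of_eq_div_mul_rpow (hc : 0 ≤ c) (hD : 0 < D) (hp : 0 ≤ p)
    (hη : ∀ k : ℕ, η k = c / (D * ((k : ℝ) + 1) ^ p)) (k : ℕ) : η k * D ≤ c := by
  have hk : 1 ≤ ((k : ℝ) + 1) ^ p := Real.one_le_rpow (by simp) hp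
  rw [hη, div_mul_eq_mul_div, div_le_iff₀ (by positivity)]
  nlinarith [mul_le_mul_of_nonneg_left hk (mul_nonneg hc hD.le)]

end StepSize

theorem summable_div_add_one_rpow_sq (η₀ : ℝ) {p : ℝ} (hp : 1 / 2 < p) :
    Summable fun k : ℕ => (η₀ / ((k : ℝ) + 1) ^ p) ^ 2 := by
  have h := (summable_nat_add_iff 1).2 (Real.summable_nat_rpow_inv.2 (by linarith : 1 < 2 * p))
  refine (h.mul_left (η₀ ^ 2)).congr fun k => ?_
  have hk : (0 : ℝ) ≤ (k : ℝ) + 1 := by positivity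
  push_cast
  rw [div_pow, ← Real.rpow_natCast (_ ^ p), ← Real.rpow_mul hk, div_eq_mul_inv]
  norm_num [mul_comm p]

theorem iInf_le_mul_rpow_of_sum_mul_sq_le {u η : ℕ → ℝ} {p R : ℝ} (hη₀ : 0 < η 0) (hp : 0 ≤ p)
    (hη : ∀ k : ℕ, η k = η 0 / ((k : ℝ) + 1) ^ p) (hu : ∀ k, 0 ≤ u k) {K : ℕ} (hK : 1 ≤ K)
    (hsum : ∑ k ∈ Finset.range K, η k * u k ^ 2 ≤ R) :
    ⨅ k : Fin K, u k ≤ (R / η 0) ^ (1 / 2 : ℝ) * (K : ℝ) ^ (-((1 - p) / 2)) := by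
  set v := ⨅ k : Fin K, u k
  have hv : 0 ≤ v := Real.iInf_nonneg fun k => hu k
  have hKpos : (0 : ℝ) < K := by exact_mod_cast hK
  have hlow : η 0 * (K : ℝ) ^ (1 - p) * v ^ 2 ≤ R := by
    calc η 0 * (K : ℝ) ^ (1 - p) * v ^ 2 = ∑ k ∈ Finset.range K, η 0 / (K : ℝ) ^ p * v ^ 2 := by
          rw [Finset.sum_const, Finset.card_range, nsmul_eq_mul, Real.rpow_sub hKpos,
            Real.rpow_one]
          field_simp
      _ ≤ ∑ k ∈ Finset.range K, η k * u k ^ 2 := by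
          refine Finset.sum_le_sum fun k hk => ?_
          have hkK := Finset.mem_range.1 hk
          have hk : (k : ℝ) + 1 ≤ K := by exact_mod_cast hkK
          rw [hη k]
          gcongr
          exact ciInf_le (f := fun j : Fin K => u j)
            ⟨0, Set.forall_mem_range.2 fun j => hu j⟩ ⟨k, hkK⟩
      _ ≤ R := hsum
  have hR : 0 ≤ R / η 0 :=
    div_nonneg ((by positivity : 0 ≤ η 0 * (K : ℝ) ^ (1 - p) * v ^ 2).trans hlow) hη₀.le
  rw [show (K : ℝ) ^ (-((1 - p) / 2)) = ((K : ℝ) ^ (-(1 - p))) ^ (1 / 2 : ℝ) by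
      rw [← Real.rpow_mul hKpos.le]; ring_nf,
    ← Real.mul_rpow hR (by positivity), ← Real.sqrt_eq_rpow, Real.le_sqrt hv (by positivity),
    Real.rpow_neg hKpos.le, ← div_eq_mul_inv, div_div, le_div_iff₀ (by positivity)]
  linarith

theorem brsgd_rate_bigO_general
    {Ω : Type*} {mΩ : MeasurableSpace Ω} {μ : Measure Ω} [IsProbabilityMeasure μ]
    (ℱ : Filtration ℕ mΩ)
    (d : ℕ)
    (F : EuclideanSpace ℝ (Fin d) → ℝ) (L : ℝ) (hL : 0 < L)
    (hF_diff : Differentiable ℝ F)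
    (hF_lip : ∀ x y, ‖gradient F x - gradient F y‖ ≤ L * ‖x - y‖)
    (Flow : ℝ) (hF_low : ∀ x, Flow ≤ F x)
    (α : ℝ) (hα0 : 0 ≤ α) (hα1 : α < Real.pi / 2)
    (E' A B C : ℝ) (hE' : 0 ≤ E') (hA : 0 ≤ A) (hC : 0 ≤ C)
    (hBE' : 0 < B * E') (p : ℝ) (hp1 : 1 / 2 < p)
    (lr : ℕ → ℝ)
    (hlr : ∀ k : ℕ, lr k = (1 - Real.sin α) / (L * B * E' * ((k : ℝ) + 1) ^ p))
    (w Agg G : ℕ → Ω → EuclideanSpace ℝ (Fin d))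
    (hw_meas : ∀ k, StronglyMeasurable[ℱ k] (w k))
    (hAgg_int : ∀ k, Integrable (fun ω => ‖Agg k ω‖ ^ 2) μ)
    (hupdate : ∀ k, ∀ ω, w (k + 1) ω = w k ω - lr k • Agg k ω)
    (hi : ∀ k, ∀ᵐ ω ∂μ,
      ⟪(μ[Agg k|ℱ k]) ω, gradient F (w k ω)⟫ ≥
        (1 - Real.sin α) * ‖gradient F (w k ω)‖ ^ 2)
    (hii : ∀ k, ∀ᵐ ω ∂μ,
      (μ[(fun ω' => ‖Agg k ω'‖ ^ 2)|ℱ k]) ω ≤ E' * (μ[(fun ω' => ‖G k ω'‖ ^ 2)|ℱ k]) ω)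
    (hiv : ∀ k, ∀ᵐ ω ∂μ,
      (μ[(fun ω' => ‖G k ω'‖ ^ 2)|ℱ k]) ω ≤
        2 * A * (F (w k ω) - Flow) + B * ‖gradient F (w k ω)‖ ^ 2 + C)
    (w0 : EuclideanSpace ℝ (Fin d)) (hw0 : ∀ ω, w 0 ω = w0) :
    (∀ K : ℕ, 1 ≤ K →
      (⨅ k : Fin K, ∫ ω, ‖gradient F (w k ω)‖ ∂μ) ≤
        (Real.exp (L * (A * E') * ∑' k : ℕ, (lr k) ^ 2) *
            (2 * (F w0 - Flow) + L * (C * E') * ∑' k : ℕ, (lr k) ^ 2) /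
          ((1 - Real.sin α) * lr 0)) ^ ((1 : ℝ) / 2) * (K : ℝ) ^ (-((1 - p) / 2))) ∧
    (fun K : ℕ => ⨅ k : Fin K, ∫ ω, ‖gradient F (w k ω)‖ ∂μ) =O[atTop]
      fun K : ℕ => (K : ℝ) ^ (-((1 - p) / 2)) := by
  have hsin : 0 < 1 - Real.sin α := sub_pos.2 (by
    simpa using Real.sin_lt_sin_of_lt_of_le_pi_div_two (by linarith [Real.pi_pos]) le_rfl hα1)
  have hD : 0 < L * B * E' := by rw [mul_assoc]; exact mul_pos hL hBE'
  have hlr_eq := eq_div_rpow_of_eq_div_mul_rpow hlr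
  have hlr0 : 0 < lr 0 := by rw [hlr 0]; exact div_pos hsin (by simpa using hD)
  have hsum := sum_mul_sq_integral_norm_gradient_le ℱ hL.le hF_diff hF_lip hF_low hsin hE' hA hC
    (fun k => by rw [hlr_eq]; positivity)
    (fun k => by linarith [mul_le_of_eq_div_mul_rpow hsin.le hD (by linarith) hlr k])
    ((summable_div_add_one_rpow_sq (lr 0) hp1).congr fun k => by rw [hlr_eq k])
    hw_meas hw0 hAgg_int hupdate hi hii hiv
  have hrate := fun K (hK : 1 ≤ K) => iInf_le_mul_rpow_of_sum_mul_sq_le hlr0 (by linarith) hlr_eq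
    (fun k => integral_nonneg fun _ => norm_nonneg _) hK (hsum K)
  simp only [div_div] at hrate
  exact ⟨hrate, .of_bound _ (by
    filter_upwards [eventually_ge_atTop 1] with K hK
    rw [Real.norm_of_nonneg (Real.iInf_nonneg fun k => integral_nonneg fun _ => norm_nonneg _),
      Real.norm_of_nonneg (by positivity)]
    exact hrate K hK)⟩

/-- explicit-constant `O(1/K^{(1-p)/2})` convergence rate for Byzantine
Resilient SGD with learning rates `α_k = (1 - sin α)/(L·B·E'·(k+1)^p)`, where
`A' := A·E'`, `C' := C·E'`, `δ_0 := F(w_0) - F_low` (with `w_0` deterministic) and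
`Q := ∑_{k=0}^∞ α_k²` (a convergent series, written as a `tsum`). -/
theorem brsgd_rate_bigO
    {Ω : Type*} {mΩ : MeasurableSpace Ω} {μ : Measure Ω} [IsProbabilityMeasure μ]
    (ℱ : Filtration ℕ mΩ)
    (d : ℕ) (hd : 1 ≤ d)
    (F : EuclideanSpace ℝ (Fin d) → ℝ) (L : ℝ) (hL : 0 < L)
    (hF_diff : Differentiable ℝ F)
    (hF_lip : ∀ x y, ‖gradient F x - gradient F y‖ ≤ L * ‖x - y‖)
    (Flow : ℝ) (hF_low : ∀ x, Flow ≤ F x)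
    (α : ℝ) (hα0 : 0 ≤ α) (hα1 : α < Real.pi / 2)
    (E' A B C : ℝ) (hE' : 0 ≤ E') (hA : 0 ≤ A) (hB : 0 ≤ B) (hC : 0 ≤ C)
    (hBE' : 0 < B * E') (p : ℝ) (hp1 : 1 / 2 < p) (hp2 : p < 1)
    (lr : ℕ → ℝ)
    (hlr : ∀ k : ℕ, lr k = (1 - Real.sin α) / (L * B * E' * ((k : ℝ) + 1) ^ p))
    (w Agg G : ℕ → Ω → EuclideanSpace ℝ (Fin d))
    (hw_meas : ∀ k, StronglyMeasurable[ℱ k] (w k))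
    (hAgg_int : ∀ k, Integrable (fun ω => ‖Agg k ω‖ ^ 2) μ)
    (hG_int : ∀ k, Integrable (fun ω => ‖G k ω‖ ^ 2) μ)
    (hupdate : ∀ k, ∀ ω, w (k + 1) ω = w k ω - lr k • Agg k ω)
    (hi : ∀ k, ∀ᵐ ω ∂μ,
      ⟪(μ[Agg k|ℱ k]) ω, gradient F (w k ω)⟫ ≥
        (1 - Real.sin α) * ‖gradient F (w k ω)‖ ^ 2)
    (hii : ∀ k, ∀ᵐ ω ∂μ,
      (μ[(fun ω' => ‖Agg k ω'‖ ^ 2)|ℱ k]) ω ≤ E' * (μ[(fun ω' => ‖G k ω'‖ ^ 2)|ℱ k]) ω)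
    (hiii : ∀ k, ∀ᵐ ω ∂μ, (μ[G k|ℱ k]) ω = gradient F (w k ω))
    (hiv : ∀ k, ∀ᵐ ω ∂μ,
      (μ[(fun ω' => ‖G k ω'‖ ^ 2)|ℱ k]) ω ≤
        2 * A * (F (w k ω) - Flow) + B * ‖gradient F (w k ω)‖ ^ 2 + C)
    (w0 : EuclideanSpace ℝ (Fin d)) (hw0 : ∀ ω, w 0 ω = w0) :
    (∀ K : ℕ, 1 ≤ K →
      (⨅ k : Fin K, ∫ ω, ‖gradient F (w k ω)‖ ∂μ) ≤
        (Real.exp (L * (A * E') * ∑' k : ℕ, (lr k) ^ 2) *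
            (2 * (F w0 - Flow) + L * (C * E') * ∑' k : ℕ, (lr k) ^ 2) /
          ((1 - Real.sin α) * lr 0)) ^ ((1 : ℝ) / 2) * (K : ℝ) ^ (-((1 - p) / 2))) ∧
    (fun K : ℕ => ⨅ k : Fin K, ∫ ω, ‖gradient F (w k ω)‖ ∂μ) =O[atTop]
      fun K : ℕ => (K : ℝ) ^ (-((1 - p) / 2)) :=
  brsgd_rate_bigO_general ℱ d F L hL hF_diff hF_lip Flow hF_low α hα0 hα1 E' A B C hE' hA hC hBE' p
    hp1 lr hlr w Agg G hw_meas hAgg_int hupdate hi hii hiv w0 hw0
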